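/- For every integer j ≥ 0 and all integers a, b ≥ 1 such that j + 2 + a + b is even, the rooted tree RT(0^j, a, b) is super edge-graceful. (Equivalently: every caterpillar of diameter 4 with an even number of edges is super edge-graceful.) -/

import Mathlib

/-- Edge type of the rooted tree `RT(a₀, …, a_{n-1})`: one edge from the root to each
child `i` (`Sum.inl i`), and one edge from child `i` to each of its `a i` leaf children
(`Sum.inr ⟨i, m⟩`).  The number of edges is `q = n + ∑ i, a i`. -/
abbrev RTEdge (n : ℕ) (a : Fin n → ℕ) := (Fin n) ⊕ (Σ i : Fin n, Fin (a i))

/-- Vertex type of the rooted tree `RT(a₀, …, a_{n-1})`: the root (`none`), the children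
`some (.inl i)` of the root, and the leaves `some (.inr ⟨i, m⟩)` attached to child `i`.
The number of vertices is `p = q + 1`. -/
abbrev RTVertex (n : ℕ) (a : Fin n → ℕ) := Option (RTEdge n a)

/-- The vertex labeling induced by an edge labeling `f`: each vertex gets the sum of the
labels of the edges incident with it. -/
def vertexSum {n : ℕ} (a : Fin n → ℕ) (f : RTEdge n a → ℤ) : RTVertex n a → ℤ
  | none => ∑ i : Fin n, f (Sum.inl i)
  | some (Sum.inl i) => f (Sum.inl i) + ∑ m : Fin (a i), f (Sum.inr ⟨i, m⟩)
  | some (Sum.inr ⟨i, m⟩) => f (Sum.inr ⟨i, m⟩)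

/-- The target label set for `q` objects: `{0, ±1, …, ±(q-1)/2}` if `q` is odd, and
`{±1, …, ±(q/2)}` if `q` is even. -/
noncomputable def segSet (q : ℕ) : Finset ℤ :=
  if q % 2 = 0 then (Finset.Icc (-((q / 2 : ℕ) : ℤ)) ((q / 2 : ℕ) : ℤ)).erase 0
  else Finset.Icc (-((q / 2 : ℕ) : ℤ)) ((q / 2 : ℕ) : ℤ)

/-- The rooted tree `RT(a₀, …, a_{n-1})` is super edge-graceful: there is an edge
labeling which is a bijection onto `{0, ±1, …, ±(q-1)/2}` (`q` odd) resp.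
`{±1, …, ±(q/2)}` (`q` even) whose induced vertex labeling is a bijection onto
`{0, ±1, …, ±(p-1)/2}` (`p` odd) resp. `{±1, …, ±(p/2)}` (`p` even), where
`q = n + ∑ i, a i` and `p = q + 1`. -/
def IsSEG {n : ℕ} (a : Fin n → ℕ) : Prop :=
  ∃ f : RTEdge n a → ℤ,
    Set.BijOn f Set.univ ↑(segSet (n + ∑ i, a i)) ∧
    Set.BijOn (vertexSum a f) Set.univ ↑(segSet (n + ∑ i, a i + 1))

/-- The sequence `(0^j, a, b)` of length `j + 2`. -/
def seq2 (j a b : ℕ) : Fin (j + 2) → ℕ :=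
  fun i => if (i : ℕ) < j then 0 else if (i : ℕ) = j then a else b

/-!
Write `q = j + 2 + a + b = 2N`. List the edges as `0, …, q - 1` and label them through a
bijection of `{0, …, q - 1}` onto `{±1, …, ±N}`. Every leaf and every childless child of the
root inherits the label of its only edge, so the induced vertex labeling is a bijection onto
`{0, ±1, …, ±N}` as soon as the three remaining vertex sums (at the root and at the children
`v_j`, `v_{j+1}`) form the set `{0, f(v₀v_j), f(v₀v_{j+1})}`. The labels are drawn from the
sequence `1, -1, 2, -2, …`, in which every block of even length starting at an even position
sums to `0`; so only the pairs `±c` split between two blocks matter, and one arrangement per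
parity class of `(a, b)` makes the three sums come out right.
-/

open Finset

lemma segSet_two_mul (N : ℕ) : segSet (2 * N) = (Icc (-(N : ℤ)) N).erase 0 := by
  rw [segSet, if_pos (by omega), Nat.mul_div_cancel_left N two_pos]

lemma segSet_two_mul_add_one (N : ℕ) : segSet (2 * N + 1) = insert 0 (segSet (2 * N)) := by
  rw [segSet_two_mul, insert_erase (by simp), segSet, if_neg (by omega)]
  congr <;> omega

lemma zero_notMem_segSet_two_mul (N : ℕ) : (0 : ℤ) ∉ segSet (2 * N) := by
  simp [segSet_two_mul]

lemma bijOn_optionElim {α β : Type*} {f : α → β} {t : Set β} (hf : Set.BijOn f Set.univ t)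
    {b : β} (hb : b ∉ t) : Set.BijOn (fun o : Option α => o.elim b f) Set.univ (insert b t) := by
  refine ⟨fun o _ => ?_, ?_, ?_⟩
  · cases o with
    | none => exact Set.mem_insert b t
    | some x => exact Set.mem_insert_of_mem b (hf.mapsTo trivial)
  · rintro (_ | x) - (_ | y) - h
    · rfl
    · exact absurd ((show b = f y from h) ▸ hf.mapsTo (Set.mem_univ y)) hb
    · exact absurd ((show f x = b from h) ▸ hf.mapsTo (Set.mem_univ x)) hb
    · exact congrArg some (hf.injOn trivial trivial h)
  · rintro c (rfl | hc)
    · exact ⟨none, trivial, rfl⟩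
    · obtain ⟨x, -, rfl⟩ := hf.surjOn hc
      exact ⟨some x, trivial, rfl⟩

lemma bijOn_of_eqOn_compl_of_image_eq {X β : Type*} [Fintype X] [DecidableEq X]
    [DecidableEq β] {g h : X → β} {t : Set β} (hh : Set.BijOn h Set.univ t) {s : Finset X}
    (hoff : ∀ x ∉ s, g x = h x) (himg : s.image g = s.image h) : Set.BijOn g Set.univ t := by
  have himg_univ : univ.image g = univ.image h := by
    rw [← union_compl s, image_union, image_union, himg,
      image_congr fun x hx => hoff x (mem_compl.1 hx)]
  have hinj : Set.InjOn g Set.univ := by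
    rw [← coe_univ, ← card_image_iff, himg_univ,
      card_image_of_injective _ (Set.injOn_univ.1 hh.injOn)]
  rw [← hh.image_eq, ← coe_univ, ← coe_image, ← himg_univ, coe_image, coe_univ]
  exact hinj.bijOn_image

lemma bijOn_univ_of_injective_of_card_le {X β : Type*} [Fintype X] [DecidableEq β]
    {f : X → β} {t : Finset β} (hinj : Function.Injective f) (hmaps : ∀ x, f x ∈ t)
    (hcard : #t ≤ Fintype.card X) : Set.BijOn f Set.univ t := by
  rw [← coe_univ]
  exact ⟨fun x _ => hmaps x, hinj.injOn, surjOn_of_injOn_of_card_le f (fun x _ => hmaps x)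
    hinj.injOn hcard⟩

lemma card_RTEdge {n : ℕ} (a : Fin n → ℕ) : Fintype.card (RTEdge n a) = n + ∑ i, a i := by
  simp [Fintype.card_sigma]

theorem isSEG_of_vertexSum_image_eq {n : ℕ} {a : Fin n → ℕ} (hq : Even (n + ∑ i, a i))
    {f : RTEdge n a → ℤ} (hf : Set.BijOn f Set.univ ↑(segSet (n + ∑ i, a i)))
    (s : Finset (RTVertex n a)) (hoff : ∀ v ∉ s, vertexSum a f v = v.elim 0 f)
    (himg : s.image (vertexSum a f) = s.image (fun v => v.elim 0 f)) : IsSEG a := by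
  obtain ⟨N, hN⟩ := hq
  rw [← two_mul] at hN
  refine ⟨f, hf, ?_⟩
  rw [hN, segSet_two_mul_add_one, coe_insert]
  rw [hN] at hf
  exact bijOn_of_eqOn_compl_of_image_eq (bijOn_optionElim hf (zero_notMem_segSet_two_mul N))
    hoff himg

section Caterpillar

variable {j a b : ℕ}

lemma seq2_of_lt {i : Fin (j + 2)} (h : (i : ℕ) < j) : seq2 j a b i = 0 := if_pos h

lemma sum_seq2 : ∑ i, seq2 j a b i = a + b := by
  simp [Fin.sum_univ_castSucc, seq2]

lemma lt_seq2_iff {i : Fin (j + 2)} {m : ℕ} :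
    m < seq2 j a b i ↔ (i : ℕ) = j ∧ m < a ∨ (i : ℕ) = j + 1 ∧ m < b := by
  have := i.2
  unfold seq2
  split_ifs <;> omega

variable (j a b) in
def seq2EdgeIndex : RTEdge (j + 2) (seq2 j a b) → ℕ
  | .inl i => i
  | .inr ⟨i, m⟩ => if (i : ℕ) = j then j + 2 + m else j + 2 + a + m

lemma seq2EdgeIndex_injective : Function.Injective (seq2EdgeIndex j a b) := by
  rintro (i | ⟨i, m⟩) (i' | ⟨i', m'⟩) h <;> simp only [seq2EdgeIndex] at h
  · exact congrArg _ (Fin.ext h)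
  · have := i.2
    split_ifs at h <;> omega
  · have := i'.2
    split_ifs at h <;> omega
  · have hm := lt_seq2_iff.1 m.2
    have hm' := lt_seq2_iff.1 m'.2
    obtain rfl : i = i' := Fin.ext (by split_ifs at h <;> omega)
    obtain rfl : m = m' := Fin.ext (by split_ifs at h <;> omega)
    rfl

lemma bijOn_seq2EdgeIndex :
    Set.BijOn (seq2EdgeIndex j a b) Set.univ ↑(range (j + 2 + a + b)) := by
  refine bijOn_univ_of_injective_of_card_le seq2EdgeIndex_injective ?_ ?_
  · rintro (i | ⟨i, m⟩) <;> simp only [seq2EdgeIndex, mem_range]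
    · omega
    · have := lt_seq2_iff.1 m.2
      split_ifs <;> omega
  · rw [card_RTEdge, sum_seq2, card_range, add_assoc]

lemma vertexSum_seq2EdgeIndex_root (g : ℕ → ℤ) :
    vertexSum (seq2 j a b) (g ∘ seq2EdgeIndex j a b) none =
      ∑ k ∈ range j, g k + g j + g (j + 1) := by
  simp only [vertexSum, Function.comp_apply, seq2EdgeIndex]
  rw [Fin.sum_univ_eq_sum_range g, sum_range_succ, sum_range_succ]

lemma vertexSum_seq2EdgeIndex_child (g : ℕ → ℤ) (i : Fin (j + 2)) :
    vertexSum (seq2 j a b) (g ∘ seq2EdgeIndex j a b) (some (.inl i)) =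
      g i + ∑ m ∈ range (seq2 j a b i),
        g (if (i : ℕ) = j then j + 2 + m else j + 2 + a + m) :=
  congrArg (g i + ·) (Fin.sum_univ_eq_sum_range
    (fun m => g (if (i : ℕ) = j then j + 2 + m else j + 2 + a + m)) _)

theorem isSEG_seq2_of_sums (hq : Even (j + 2 + a + b)) {g : ℕ → ℤ}
    (hg : Set.BijOn g ↑(range (j + 2 + a + b)) ↑(segSet (j + 2 + a + b)))
    (hsums : ({∑ k ∈ range j, g k + g j + g (j + 1), g j + ∑ m ∈ range a, g (j + 2 + m),
        g (j + 1) + ∑ m ∈ range b, g (j + 2 + a + m)} : Finset ℤ) = {0, g j, g (j + 1)}) :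
    IsSEG (seq2 j a b) := by
  have hq' : j + 2 + ∑ i, seq2 j a b i = j + 2 + a + b := by rw [sum_seq2, ← add_assoc]
  refine isSEG_of_vertexSum_image_eq (f := g ∘ seq2EdgeIndex j a b) (by rwa [hq'])
    (by rw [hq']; exact hg.comp bijOn_seq2EdgeIndex)
    {none, some (.inl ⟨j, by omega⟩), some (.inl ⟨j + 1, by omega⟩)} ?_ ?_
  · rintro (_ | i | ⟨i, m⟩) hv
    · simp at hv
    · have hi : (i : ℕ) < j := by
        have := i.2
        simp only [mem_insert, mem_singleton, Option.some.injEq, Sum.inl.injEq, Fin.ext_iff,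
          reduceCtorEq, false_or] at hv
        omega
      rw [vertexSum_seq2EdgeIndex_child, seq2_of_lt hi, sum_range_zero, add_zero]
      rfl
    · rfl
  · simp only [image_insert, image_singleton, vertexSum_seq2EdgeIndex_root,
      vertexSum_seq2EdgeIndex_child]
    simp only [seq2, lt_self_iff_false, ↓reduceIte, add_lt_iff_neg_left, not_lt_zero,
      Nat.add_eq_left, one_ne_zero, Option.elim_none]
    exact hsums

end Caterpillar

def altLabel (k : ℕ) : ℤ := if k % 2 = 0 then ((k / 2 + 1 : ℕ) : ℤ) else -((k / 2 + 1 : ℕ) : ℤ)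

lemma two_mul_altLabel_of_even {k : ℕ} (hk : Even k) : 2 * altLabel k = k + 2 := by
  rw [Nat.even_iff] at hk
  simp only [altLabel, if_pos hk]
  omega

lemma two_mul_altLabel_of_odd {k : ℕ} (hk : Odd k) : 2 * altLabel k = -(k + 1) := by
  rw [Nat.odd_iff] at hk
  simp only [altLabel, if_neg (by omega : ¬k % 2 = 0)]
  omega

lemma altLabel_injective : Function.Injective altLabel := by
  intro k l h
  simp only [altLabel] at h
  split_ifs at h <;> omega

lemma bijOn_altLabel {q : ℕ} (hq : Even q) : Set.BijOn altLabel ↑(range q) ↑(segSet q) := by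
  obtain ⟨N, rfl⟩ := hq
  rw [← two_mul, segSet_two_mul]
  have hmaps : Set.MapsTo altLabel ↑(range (2 * N)) ↑((Icc (-(N : ℤ)) N).erase 0) := by
    intro k hk
    simp only [coe_range, Set.mem_Iio, coe_erase, coe_Icc, Set.mem_sdiff, Set.mem_Icc,
      Set.mem_singleton_iff, altLabel] at hk ⊢
    split_ifs <;> omega
  refine ⟨hmaps, altLabel_injective.injOn, surjOn_of_injOn_of_card_le _ hmaps
    altLabel_injective.injOn ?_⟩
  rw [card_erase_of_mem (by simp), Int.card_Icc, card_range]
  omega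

lemma sum_altLabel_add_range {s l : ℕ} (hs : Even s) (hl : Even l) :
    ∑ m ∈ range l, altLabel (s + m) = 0 := by
  obtain ⟨c, rfl⟩ := hs
  obtain ⟨n, rfl⟩ := hl
  induction n with
  | zero => rfl
  | succ n ih =>
    rw [show n + 1 + (n + 1) = n + n + 1 + 1 by ring, sum_range_succ, sum_range_succ, ih]
    simp only [altLabel]
    split_ifs <;> omega

lemma sum_altLabel_comp_eq_zero {f : ℕ → ℕ} {t l : ℕ} (ht : Even t) (hl : Even l)
    (hf : ∀ m < l, f m = t + m) : ∑ m ∈ range l, altLabel (f m) = 0 := by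
  rw [sum_congr rfl fun m hm => congrArg altLabel (hf m (mem_range.1 hm))]
  exact sum_altLabel_add_range ht hl

lemma bijOn_altLabel_comp {q : ℕ} (hq : Even q) {τ : ℕ → ℕ} (hmaps : ∀ k < q, τ k < q)
    (hinj : Set.InjOn τ ↑(range q)) :
    Set.BijOn (altLabel ∘ τ) ↑(range q) ↑(segSet q) := by
  have hmaps' : Set.MapsTo τ ↑(range q) ↑(range q) := fun k hk => by
    simpa using hmaps k (by simpa using hk)
  exact (bijOn_altLabel hq).comp
    (((range q).finite_toSet.injOn_iff_bijOn_of_mapsTo hmaps').1 hinj)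

lemma isSEG_seq2_even_even (j a b : ℕ) : IsSEG (seq2 (2 * j) (2 * a) (2 * b)) := by
  -- Every block consists of whole pairs; the two spine edges share the pair `±(j + 1)`.
  refine isSEG_seq2_of_sums (g := altLabel) ⟨j + a + b + 1, by ring⟩
    (bijOn_altLabel ⟨j + a + b + 1, by ring⟩) ?_
  rw [sum_altLabel_comp_eq_zero (t := 0) .zero (even_two_mul j) fun m _ => (zero_add m).symm,
    sum_altLabel_add_range (by simp [parity_simps]) (even_two_mul a),
    sum_altLabel_add_range (by simp [parity_simps]) (even_two_mul b)]
  have := two_mul_altLabel_of_even (even_two_mul j)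
  have := two_mul_altLabel_of_odd (odd_two_mul_add_one j)
  ext x
  simp only [mem_insert, mem_singleton]
  omega

lemma isSEG_seq2_odd_odd (j a b : ℕ) : IsSEG (seq2 (2 * j) (2 * a + 1) (2 * b + 1)) := by
  have hq : Even (2 * j + 2 + (2 * a + 1) + (2 * b + 1)) := ⟨j + a + b + 2, by ring⟩
  -- The spine edges get `1, -1`, the leaves of `v_j` get `-2` and whole pairs, those of
  -- `v_{j+1}` get `2` and whole pairs: the sums at `v_j` and `v_{j+1}` are exchanged.
  set τ : ℕ → ℕ := fun k =>
      if k < 2 * j then k + (2 * a + 2 * b + 4)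
      else if k < 2 * j + 2 then k - 2 * j
      else if k < 2 * j + 3 + 2 * a then k - 2 * j + 1
      else if k = 2 * j + 3 + 2 * a then 2 else k - 2 * j with hτ
  refine isSEG_seq2_of_sums (g := altLabel ∘ τ) hq
    (bijOn_altLabel_comp hq (fun k hk => by simp only [hτ]; split_ifs <;> omega) ?_) ?_
  · intro k hk l hl h
    simp only [coe_range, Set.mem_Iio] at hk hl
    simp only [hτ] at h
    split_ifs at h <;> omega
  have hτP : τ (2 * j) = 0 := by simp only [hτ]; split_ifs <;> omega
  have hτQ : τ (2 * j + 1) = 1 := by simp only [hτ]; split_ifs <;> omega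
  have hτU : τ (2 * j + 2 + 0) = 3 := by simp only [hτ]; split_ifs <;> omega
  have hτW : τ (2 * j + 2 + (2 * a + 1) + 0) = 2 := by simp only [hτ]; split_ifs <;> omega
  have hZ : ∑ k ∈ range (2 * j), altLabel (τ k) = 0 :=
    sum_altLabel_comp_eq_zero (t := 2 * a + 2 * b + 4) ⟨a + b + 2, by ring⟩ (even_two_mul j)
      fun m hm => by simp only [hτ, if_pos hm]; ring
  have hU : ∑ m ∈ range (2 * a + 1), altLabel (τ (2 * j + 2 + m)) = -2 := by
    rw [sum_range_succ', sum_altLabel_comp_eq_zero (t := 4) ⟨2, rfl⟩ (even_two_mul a)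
      fun m hm => by simp only [hτ]; split_ifs <;> omega, hτU]
    rfl
  have hW : ∑ m ∈ range (2 * b + 1), altLabel (τ (2 * j + 2 + (2 * a + 1) + m)) = 2 := by
    rw [sum_range_succ', sum_altLabel_comp_eq_zero (t := 2 * a + 4) ⟨a + 2, by ring⟩
      (even_two_mul b) fun m hm => by simp only [hτ]; split_ifs <;> omega, hτW]
    rfl
  simp only [Function.comp_apply, hZ, hU, hW, hτP, hτQ]
  decide

lemma isSEG_seq2_odd_even (j a b : ℕ) : IsSEG (seq2 (2 * j + 1) (2 * a + 1) (2 * b)) := by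
  have hq : Even (2 * j + 1 + 2 + (2 * a + 1) + 2 * b) := ⟨j + a + b + 2, by ring⟩
  -- The pair `±(j + 1)` is split between the last root-leaf edge and `v₀v_{j+1}`, the pair
  -- `±(j + 2)` between `v₀v_j` and a leaf of `v_j`; the sum at `v_j` vanishes.
  set τ := Equiv.swap (2 * j + 1) (2 * j + 2)
  refine isSEG_seq2_of_sums (g := altLabel ∘ τ) hq (bijOn_altLabel_comp hq
    (fun k hk => by rw [Equiv.swap_apply_def]; split_ifs <;> omega) τ.injective.injOn) ?_
  have hZ : ∑ k ∈ range (2 * j), altLabel (τ k) = 0 :=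
    sum_altLabel_comp_eq_zero (t := 0) .zero (even_two_mul j)
      fun m hm => by rw [Equiv.swap_apply_of_ne_of_ne (by omega) (by omega), zero_add]
  have hU : ∑ m ∈ range (2 * a), altLabel (τ (2 * j + 1 + 2 + (m + 1))) = 0 :=
    sum_altLabel_comp_eq_zero (t := 2 * j + 4) ⟨j + 2, by ring⟩ (even_two_mul a)
      fun m hm => by rw [Equiv.swap_apply_of_ne_of_ne (by omega) (by omega)]; ring
  have hW : ∑ m ∈ range (2 * b), altLabel (τ (2 * j + 1 + 2 + (2 * a + 1) + m)) = 0 :=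
    sum_altLabel_comp_eq_zero (t := 2 * j + 2 * a + 4) ⟨j + a + 2, by ring⟩ (even_two_mul b)
      fun m hm => by rw [Equiv.swap_apply_of_ne_of_ne (by omega) (by omega)]; ring
  have hτZ : τ (2 * j) = 2 * j := Equiv.swap_apply_of_ne_of_ne (by omega) (by omega)
  have hτU : τ (2 * j + 1 + 2 + 0) = 2 * j + 3 :=
    Equiv.swap_apply_of_ne_of_ne (by omega) (by omega)
  simp only [Function.comp_apply]
  rw [sum_range_succ, sum_range_succ', hZ, hU, hW, hτZ, hτU, Equiv.swap_apply_left,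
    Equiv.swap_apply_right]
  have := two_mul_altLabel_of_even (even_two_mul j)
  have := two_mul_altLabel_of_odd (odd_two_mul_add_one j)
  have := two_mul_altLabel_of_even (k := 2 * j + 2) (by simp [parity_simps])
  have := two_mul_altLabel_of_odd (k := 2 * j + 3) (by simp [parity_simps])
  ext x
  simp only [mem_insert, mem_singleton]
  omega

lemma isSEG_seq2_even_odd (j a b : ℕ) : IsSEG (seq2 (2 * j + 1) (2 * a) (2 * b + 1)) := by
  have hq : Even (2 * j + 1 + 2 + 2 * a + (2 * b + 1)) := ⟨j + a + b + 2, by ring⟩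
  -- The pair `±(j + 1)` is split between the last root-leaf edge and `v₀v_j`, the pair
  -- `±(j + 2)` between `v₀v_{j+1}` and a leaf of `v_{j+1}`; the sum at `v_{j+1}` vanishes.
  set τ : ℕ → ℕ := fun k =>
    if k < 2 * j + 3 then k else if k < 2 * j + 3 + 2 * a then k + (2 * b + 1) else k - 2 * a
    with hτ
  refine isSEG_seq2_of_sums (g := altLabel ∘ τ) hq
    (bijOn_altLabel_comp hq (fun k hk => by simp only [hτ]; split_ifs <;> omega) ?_) ?_
  · intro k hk l hl h
    simp only [coe_range, Set.mem_Iio] at hk hl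
    simp only [hτ] at h
    split_ifs at h <;> omega
  have hZ : ∑ k ∈ range (2 * j), altLabel (τ k) = 0 :=
    sum_altLabel_comp_eq_zero (t := 0) .zero (even_two_mul j)
      fun m hm => by simp only [hτ]; split_ifs <;> omega
  have hU : ∑ m ∈ range (2 * a), altLabel (τ (2 * j + 1 + 2 + m)) = 0 :=
    sum_altLabel_comp_eq_zero (t := 2 * j + 2 * b + 4) ⟨j + b + 2, by ring⟩ (even_two_mul a)
      fun m hm => by simp only [hτ]; split_ifs <;> omega
  have hW : ∑ m ∈ range (2 * b), altLabel (τ (2 * j + 1 + 2 + 2 * a + (m + 1))) = 0 :=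
    sum_altLabel_comp_eq_zero (t := 2 * j + 4) ⟨j + 2, by ring⟩ (even_two_mul b)
      fun m hm => by simp only [hτ]; split_ifs <;> omega
  have hτZ : τ (2 * j) = 2 * j := if_pos (by omega)
  have hτP : τ (2 * j + 1) = 2 * j + 1 := if_pos (by omega)
  have hτQ : τ (2 * j + 1 + 1) = 2 * j + 2 := if_pos (by omega)
  have hτW : τ (2 * j + 1 + 2 + 2 * a + 0) = 2 * j + 3 := by simp only [hτ]; split_ifs <;> omega
  simp only [Function.comp_apply]
  rw [sum_range_succ, sum_range_succ', hZ, hU, hW, hτZ, hτP, hτQ, hτW]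
  have := two_mul_altLabel_of_even (even_two_mul j)
  have := two_mul_altLabel_of_odd (odd_two_mul_add_one j)
  have := two_mul_altLabel_of_even (k := 2 * j + 2) (by simp [parity_simps])
  have := two_mul_altLabel_of_odd (k := 2 * j + 3) (by simp [parity_simps])
  ext x
  simp only [mem_insert, mem_singleton]
  omega

theorem stmt2_general (j a b : ℕ)
    (heven : Even (j + 2 + a + b)) : IsSEG (seq2 j a b) := by
  rw [Nat.even_iff] at heven
  obtain ⟨j, rfl | rfl⟩ := Nat.even_or_odd' j <;> obtain ⟨a, rfl | rfl⟩ := Nat.even_or_odd' a <;>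
    obtain ⟨b, rfl | rfl⟩ := Nat.even_or_odd' b
  all_goals first
    | omega
    | exact isSEG_seq2_even_even j a b
    | exact isSEG_seq2_odd_odd j a b
    | exact isSEG_seq2_odd_even j a b
    | exact isSEG_seq2_even_odd j a b

/-- Every caterpillar of diameter `4` with an even number of edges is super
edge-graceful: for every `j ≥ 0` and all `a, b ≥ 1` such that `j + 2 + a + b` is even,
the rooted tree `RT(0^j, a, b)` is super edge-graceful. -/
theorem stmt2 (j a b : ℕ) (ha : 1 ≤ a) (hb : 1 ≤ b)
    (heven : Even (j + 2 + a + b)) : IsSEG (seq2 j a b) :=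
  stmt2_general j a b heven
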